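/- For any bounded domain D in ℂⁿ, the squeezing function s_D : D → (0, 1] is continuous (with respect to the Euclidean topology on D). -/

import Mathlib

/-!
A holomorphic map of `D` into the unit ball that vanishes at `q` moves a nearby point `p` by at
most `dist p q / δ` (Schwarz lemma on a ball `B(q, δ) ⊆ D`). Recentering such a map at `p`, i.e.
composing it with `w ↦ (w - f p) / (1 + ‖f p‖)`, loses at most `2 ‖f p‖` of the squeezing radius.
Hence the squeezing function is locally Lipschitz, with constant `2 / δ`.
-/

open Metric

/-- The squeezing function of a bounded domain `D ⊆ ℂⁿ` at a point `p ∈ D`: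
the supremum of all `r > 0` such that some injective holomorphic map `f : D → Bⁿ`
with `f p = 0` satisfies `Bⁿ(0, r) ⊆ f '' D`. -/
noncomputable def squeezingFn {n : ℕ} (D : Set (EuclideanSpace ℂ (Fin n)))
    (p : EuclideanSpace ℂ (Fin n)) : ℝ :=
  sSup { r : ℝ | ∃ f : EuclideanSpace ℂ (Fin n) → EuclideanSpace ℂ (Fin n),
    DifferentiableOn ℂ f D ∧ Set.InjOn f D ∧ f '' D ⊆ ball 0 1 ∧ f p = 0 ∧
    0 < r ∧ ball (0 : EuclideanSpace ℂ (Fin n)) r ⊆ f '' D }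

open Set

/-- The squeezing function is the supremum of this set. -/
def squeezingRadii {E : Type*} [NormedAddCommGroup E] [NormedSpace ℂ E] (D : Set E) (p : E) :
    Set ℝ :=
  { r : ℝ | ∃ f : E → E, DifferentiableOn ℂ f D ∧ InjOn f D ∧ f '' D ⊆ ball 0 1 ∧ f p = 0 ∧
    0 < r ∧ ball (0 : E) r ⊆ f '' D }

section

variable {E : Type*} [NormedAddCommGroup E] [NormedSpace ℂ E]

theorem le_one_of_ball_zero_subset_ball_zero [Nontrivial E] {r : ℝ}
    (h : ball (0 : E) r ⊆ ball 0 1) : r ≤ 1 := by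
  by_contra! hr
  obtain ⟨x, hx⟩ := exists_norm_eq E zero_le_one
  have := h (mem_ball_zero_iff.mpr (hx ▸ hr))
  rw [mem_ball_zero_iff, hx] at this
  exact lt_irrefl _ this

theorem bddAbove_squeezingRadii [Nontrivial E] (D : Set E) (p : E) :
    BddAbove (squeezingRadii D p) :=
  ⟨1, fun _ ⟨_, _, _, him, _, _, hcov⟩ ↦ le_one_of_ball_zero_subset_ball_zero (hcov.trans him)⟩

theorem sSup_squeezingRadii_nonneg (D : Set E) (p : E) : 0 ≤ sSup (squeezingRadii D p) :=
  Real.sSup_nonneg fun _ ⟨_, _, _, _, _, hr, _⟩ ↦ hr.le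

theorem recenter_mem_squeezingRadii {D : Set E} {f : E → E} {q : E} {r : ℝ}
    (hf : DifferentiableOn ℂ f D) (hinj : InjOn f D) (him : f '' D ⊆ ball 0 1)
    (hcov : ball (0 : E) r ⊆ f '' D) (hq : ‖f q‖ < r) :
    (r - ‖f q‖) / (1 + ‖f q‖) ∈ squeezingRadii D q := by
  set e := ‖f q‖
  have he : 0 ≤ e := norm_nonneg _
  set c : ℂ := ((1 + e : ℝ) : ℂ)
  have hc : ‖c‖ = 1 + e := by rw [Complex.norm_real, Real.norm_of_nonneg (by positivity)]
  have hc0 : c ≠ 0 := by rw [← norm_ne_zero_iff, hc]; positivity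
  refine ⟨fun z ↦ c⁻¹ • (f z - f q), (hf.sub_const _).const_smul _, ?_, ?_, by simp,
    div_pos (by linarith) (by positivity), ?_⟩
  · intro x hx y hy hxy
    exact hinj hx hy (sub_left_injective (smul_right_injective E (inv_ne_zero hc0) hxy))
  · rintro _ ⟨z, hz, rfl⟩
    have hfz : ‖f z‖ < 1 := mem_ball_zero_iff.mp (him ⟨z, hz, rfl⟩)
    rw [mem_ball_zero_iff, norm_smul, norm_inv, hc, inv_mul_lt_iff₀ (by positivity), mul_one]
    linarith [norm_sub_le (f z) (f q)]
  · intro w hw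
    rw [mem_ball_zero_iff, lt_div_iff₀ (by positivity)] at hw
    have hwr : f q + c • w ∈ ball (0 : E) r := by
      rw [mem_ball_zero_iff]
      calc ‖f q + c • w‖ ≤ e + (1 + e) * ‖w‖ := by rw [← hc, ← norm_smul]; exact norm_add_le _ _
        _ < r := by linarith
    obtain ⟨z, hz, hfz⟩ := hcov hwr
    refine ⟨z, hz, ?_⟩
    simp only [hfz, add_sub_cancel_left, smul_smul, inv_mul_cancel₀ hc0, one_smul]

theorem sub_two_mul_norm_le_sSup_squeezingRadii [Nontrivial E] {D : Set E} {f : E → E} {r : ℝ}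
    (hf : DifferentiableOn ℂ f D) (hinj : InjOn f D) (him : f '' D ⊆ ball 0 1)
    (hcov : ball (0 : E) r ⊆ f '' D) (q : E) :
    r - 2 * ‖f q‖ ≤ sSup (squeezingRadii D q) := by
  rcases lt_or_ge ‖f q‖ r with hq | hq
  · have hr1 : r ≤ 1 := le_one_of_ball_zero_subset_ball_zero (hcov.trans him)
    have hle : r - 2 * ‖f q‖ ≤ (r - ‖f q‖) / (1 + ‖f q‖) := by
      rw [le_div_iff₀ (by positivity)]
      nlinarith [norm_nonneg (f q)]
    exact hle.trans
      (le_csSup (bddAbove_squeezingRadii D q) (recenter_mem_squeezingRadii hf hinj him hcov hq))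
  · linarith [norm_nonneg (f q), sSup_squeezingRadii_nonneg D q]

theorem sSup_squeezingRadii_le_add [Nontrivial E] {D : Set E} {p q : E} {δ : ℝ}
    (hD : ball q δ ⊆ D) (hp : p ∈ ball q δ) :
    sSup (squeezingRadii D q) ≤ sSup (squeezingRadii D p) + 2 / δ * dist p q := by
  have hδ : 0 < δ := pos_of_mem_ball hp
  refine Real.sSup_le ?_ (by positivity [sSup_squeezingRadii_nonneg D p])
  rintro r ⟨g, hg, hinj, him, hgq, -, hcov⟩
  have hmaps : MapsTo g (ball q δ) (closedBall (g q) 1) := fun x hx ↦ by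
    rw [hgq]; exact ball_subset_closedBall (him ⟨x, hD hx, rfl⟩)
  have hgp : ‖g p‖ ≤ 1 / δ * dist p q := by
    simpa [hgq] using Complex.dist_le_div_mul_dist_of_mapsTo_ball (hg.mono hD) hmaps hp
  have := sub_two_mul_norm_le_sSup_squeezingRadii hg hinj him hcov p
  linarith [show 2 / δ * dist p q = 2 * (1 / δ * dist p q) by ring]

theorem continuousOn_sSup_squeezingRadii [Nontrivial E] {D : Set E} (hD : IsOpen D) :
    ContinuousOn (fun p ↦ sSup (squeezingRadii D p)) D := by
  refine continuousOn_of_forall_continuousAt fun p hp ↦ ?_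
  obtain ⟨ε, hε, hball⟩ := Metric.isOpen_iff.mp hD p hp
  refine continuousAt_of_locally_lipschitz (half_pos hε) (2 / (ε / 2)) fun q hq ↦ ?_
  have hqp : q ∈ ball p (ε / 2) := hq
  have hball_q : ball q (ε / 2) ⊆ D := fun x hx ↦ hball <| by
    rw [mem_ball] at hx ⊢
    linarith [dist_triangle x q p]
  have hq_le := sSup_squeezingRadii_le_add hball_q (mem_ball_comm.mp hqp)
  have hp_le := sSup_squeezingRadii_le_add ((ball_subset_ball (half_le_self hε.le)).trans hball) hqp
  rw [dist_comm p q] at hq_le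
  rw [Real.dist_eq, abs_sub_le_iff]
  constructor <;> linarith

end

theorem stmt_4_general {n : ℕ} (D : Set (EuclideanSpace ℂ (Fin n)))
    (hDopen : IsOpen D) :
    ContinuousOn (squeezingFn D) D := by
  rcases n.eq_zero_or_pos with rfl | hn
  · exact subsingleton_of_subsingleton.continuousOn _
  · have : NeZero n := ⟨hn.ne'⟩
    exact continuousOn_sSup_squeezingRadii hDopen

/-- Continuity of squeezing functions.
The squeezing function of any bounded domain `D ⊆ ℂⁿ` is continuous on `D`. -/
theorem stmt_4 {n : ℕ} (D : Set (EuclideanSpace ℂ (Fin n)))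
    (hDopen : IsOpen D) (hDconn : IsConnected D) (hDbd : Bornology.IsBounded D) :
    ContinuousOn (squeezingFn D) D :=
  stmt_4_general D hDopen
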